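/- arXiv:2311.10265 — 2 statements merged into one kernel-verified Lean document; each statement's English description precedes it below -/
import Mathlib

section
/- For any g ∈ GL_n(R) and V = Rv ∈ P(R^n) with ‖v‖ = 1, one has d(V, H_g⁻) ≤ ‖gv‖/‖g‖ ≤ d(V, H_g⁻) + σ₂(g)/σ₁(g), and moreover d(gV, V_g⁺) · d(V, H_g⁻) ≤ σ₂(g)/σ₁(g). -/
/- The Cartan decomposition is g = k' ∘ diag(a) ∘ k, so ‖g‖ = σ₁ = a 0 and σ₂ = a 1, H_g⁻ is the
hyperplane with unit normal k⁻¹e₁, and V_g⁺ is the line through k' e₁. -/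

open scoped RealInnerProductSpace
noncomputable section

/-- Projective distance `d(ℝv, ℝw) = ‖v ∧ w‖ / (‖v‖ ‖w‖)`. -/
def projDist {n : ℕ} (v w : EuclideanSpace ℝ (Fin n)) : ℝ :=
  Real.sqrt (‖v‖ ^ 2 * ‖w‖ ^ 2 - ⟪v, w⟫ ^ 2) / (‖v‖ * ‖w‖)

/-- Distance from the projective point `ℝv` to the projective hyperplane with
normal vector `u`. -/
def distToHyp {n : ℕ} (v u : EuclideanSpace ℝ (Fin n)) : ℝ :=
  |⟪v, u⟫| / (‖v‖ * ‖u‖)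

/-- The diagonal map with entries `a`. -/
def diagMap {n : ℕ} (a : Fin n → ℝ) (v : EuclideanSpace ℝ (Fin n)) :
    EuclideanSpace ℝ (Fin n) :=
  (WithLp.equiv 2 (Fin n → ℝ)).symm (fun i => a i * v i)


/-! With `w = k v` (a unit vector) and `u = diag(a) w`, the isometries `k`, `k'` turn the three
quantities into coordinates: `d(V, H_g⁻) = |w₀|`, `‖g v‖ = ‖u‖` and
`d(gV, V_g⁺) = √(‖u‖² - u₀²) / ‖u‖`. Everything then follows from `|u₀| = a₀ |w₀| ≤ ‖u‖` and
`‖u‖² - u₀² = ∑_{j ≠ 0} a_j² w_j² ≤ a₁²`, as the `a_j` decrease and `w` is a unit vector. -/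

open EuclideanSpace

section Isometry

variable {n : ℕ} (f : EuclideanSpace ℝ (Fin n) →ₗᵢ[ℝ] EuclideanSpace ℝ (Fin n))
  (x y : EuclideanSpace ℝ (Fin n))

theorem projDist_map : projDist (f x) (f y) = projDist x y := by
  simp only [projDist, f.norm_map, f.inner_map_map]

theorem distToHyp_map : distToHyp (f x) (f y) = distToHyp x y := by
  simp only [distToHyp, f.norm_map, f.inner_map_map]

end Isometry

section Coordinates

variable {n : ℕ} (x : EuclideanSpace ℝ (Fin n)) (i : Fin n)

theorem distToHyp_single_one : distToHyp x (single i 1) = |x i| / ‖x‖ := by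
  simp [distToHyp, inner_single_right]

theorem projDist_single_one :
    projDist x (single i 1) = √(‖x‖ ^ 2 - x i ^ 2) / ‖x‖ := by
  simp [projDist, inner_single_right]

theorem norm_sq_sub_sq_apply : ‖x‖ ^ 2 - x i ^ 2 = ∑ j ∈ Finset.univ.erase i, x j ^ 2 := by
  rw [real_norm_sq_eq, ← Finset.add_sum_erase _ _ (Finset.mem_univ i), add_sub_cancel_left]

theorem projDist_single_one_mul_abs_apply_le :
    projDist x (single i 1) * |x i| ≤ √(‖x‖ ^ 2 - x i ^ 2) := by
  rw [projDist_single_one]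
  rcases (norm_nonneg x).eq_or_lt with hx | hx
  · simp [← hx]
  · rw [div_mul_eq_mul_div, div_le_iff₀ hx]
    exact mul_le_mul_of_nonneg_left (PiLp.norm_apply_le x i) (Real.sqrt_nonneg _)

end Coordinates

section Diagonal

variable {n : ℕ} (a : Fin n → ℝ) (w : EuclideanSpace ℝ (Fin n)) (i : Fin n)

@[simp]
theorem diagMap_apply : diagMap a w i = a i * w i := rfl

variable {a w i} {b : ℝ}

theorem norm_diagMap_sq_sub_sq_apply_le (hb : ∀ j ≠ i, |a j| ≤ b) (hw : ‖w‖ ≤ 1) :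
    ‖diagMap a w‖ ^ 2 - (a i * w i) ^ 2 ≤ b ^ 2 := by
  have hw2 : ∑ j ∈ Finset.univ.erase i, w j ^ 2 ≤ 1 := by
    rw [← norm_sq_sub_sq_apply]
    nlinarith [norm_nonneg w, sq_nonneg (w i)]
  calc ‖diagMap a w‖ ^ 2 - (a i * w i) ^ 2
      = ∑ j ∈ Finset.univ.erase i, a j ^ 2 * w j ^ 2 := by
        rw [← diagMap_apply a w i, norm_sq_sub_sq_apply]
        simp only [diagMap_apply, mul_pow]
    _ ≤ ∑ j ∈ Finset.univ.erase i, b ^ 2 * w j ^ 2 := by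
        refine Finset.sum_le_sum fun j hj => ?_
        obtain ⟨hlo, hhi⟩ := abs_le.mp (hb j (Finset.ne_of_mem_erase hj))
        exact mul_le_mul_of_nonneg_right (sq_le_sq' hlo hhi) (sq_nonneg _)
    _ ≤ b ^ 2 := by
        rw [← Finset.mul_sum]
        exact mul_le_of_le_one_right (sq_nonneg b) hw2

theorem norm_diagMap_le (hb0 : 0 ≤ b) (hb : ∀ j ≠ i, |a j| ≤ b) (hw : ‖w‖ ≤ 1) :
    ‖diagMap a w‖ ≤ |a i * w i| + b := by
  have := norm_diagMap_sq_sub_sq_apply_le hb hw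
  refine abs_le_of_sq_le_sq' ?_ (by positivity) |>.2
  nlinarith [sq_abs (a i * w i), abs_nonneg (a i * w i)]

end Diagonal

theorem gv_norm_vs_distance_to_repelling_hyperplane
    {n : ℕ} (hn : 2 ≤ n)
    (g : EuclideanSpace ℝ (Fin n) →ₗ[ℝ] EuclideanSpace ℝ (Fin n))
    (k k' : EuclideanSpace ℝ (Fin n) ≃ₗᵢ[ℝ] EuclideanSpace ℝ (Fin n))
    (a : Fin n → ℝ) (ha : ∀ i, 0 < a i)
    (hmono : ∀ i j : Fin n, i ≤ j → a j ≤ a i)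
    (hg : ∀ v, g v = k' (diagMap a (k v)))
    (v : EuclideanSpace ℝ (Fin n)) (hv : ‖v‖ = 1) :
    distToHyp v (k.symm (EuclideanSpace.single (⟨0, by omega⟩ : Fin n) 1))
        ≤ ‖g v‖ / a ⟨0, by omega⟩ ∧
      ‖g v‖ / a ⟨0, by omega⟩
        ≤ distToHyp v (k.symm (EuclideanSpace.single (⟨0, by omega⟩ : Fin n) 1))
            + a ⟨1, by omega⟩ / a ⟨0, by omega⟩ ∧
      projDist (g v) (k' (EuclideanSpace.single (⟨0, by omega⟩ : Fin n) 1))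
          * distToHyp v (k.symm (EuclideanSpace.single (⟨0, by omega⟩ : Fin n) 1))
        ≤ a ⟨1, by omega⟩ / a ⟨0, by omega⟩ := by
  set i₀ : Fin n := ⟨0, by omega⟩
  set i₁ : Fin n := ⟨1, by omega⟩
  set u := diagMap a (k v)
  have hkv : ‖k v‖ = 1 := by rw [k.norm_map, hv]
  have hd : distToHyp v (k.symm (single i₀ 1)) = |k v i₀| := by
    rw [← distToHyp_map k.toLinearIsometry]
    simp [distToHyp_single_one, hkv]
  have hu₀ : |u i₀| = a i₀ * |k v i₀| := by
    rw [diagMap_apply, abs_mul, abs_of_pos (ha i₀)]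
  have hb : ∀ j ≠ i₀, |a j| ≤ a i₁ := fun j hj => by
    rw [abs_of_pos (ha j)]
    exact hmono i₁ j (Fin.le_iff_val_le_val.mpr (Nat.one_le_iff_ne_zero.mpr (Fin.val_ne_of_ne hj)))
  have htail : √(‖u‖ ^ 2 - u i₀ ^ 2) ≤ a i₁ :=
    Real.sqrt_le_iff.mpr ⟨(ha i₁).le, norm_diagMap_sq_sub_sq_apply_le hb hkv.le⟩
  rw [hg, LinearIsometryEquiv.norm_map, ← k'.coe_toLinearIsometry, projDist_map, hd]
  refine ⟨?_, ?_, ?_⟩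
  · rw [le_div_iff₀ (ha i₀), mul_comm, ← hu₀]
    exact PiLp.norm_apply_le u i₀
  · rw [div_le_iff₀ (ha i₀), add_mul, div_mul_cancel₀ _ (ha i₀).ne', mul_comm, ← hu₀]
    exact norm_diagMap_le (ha i₁).le hb hkv.le
  · calc projDist u (single i₀ 1) * |k v i₀|
        = projDist u (single i₀ 1) * |u i₀| / a i₀ := by
          rw [hu₀, mul_left_comm, mul_div_cancel_left₀ _ (ha i₀).ne']
      _ ≤ a i₁ / a i₀ := div_le_div_of_nonneg_right
          ((projDist_single_one_mul_abs_apply_le u i₀).trans htail) (ha i₀).le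
end
end

section
/- Let C > 1 and V ∈ P(R³) with d(V, E₁^⊥) ≥ 1/C. Then the projective map π(V, E₁^⊥, V^⊥) : P(V^⊥) → P(E₁^⊥) induced by the linear projection from V^⊥ to E₁^⊥ along V scales by 1 with distortion at most C; i.e., for all distinct x, x' ∈ P(V^⊥), 1/C ≤ d(π(V,E₁^⊥,V^⊥)x, π(V,E₁^⊥,V^⊥)x')/d(x,x') ≤ C. -/
/- STATEMENT 12: Let C > 1 and V = ℝz ∈ P(ℝ³) with d(V, E₁^⊥) ≥ 1/C (for unit z,
d(V, E₁^⊥) = |z 0|). Then the projective map π(V, E₁^⊥, V^⊥) induced by the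
linear projection v ↦ v − (v 0 / z 0)·z from V^⊥ to E₁^⊥ along V scales by 1
with distortion at most C. -/

noncomputable section

/-- Euclidean norm of a vector. -/
def en {m : ℕ} (v : Fin m → ℝ) : ℝ := Real.sqrt (∑ i, v i ^ 2)

/-- Euclidean inner product. -/
def ip {m : ℕ} (v w : Fin m → ℝ) : ℝ := ∑ i, v i * w i

/-- Projective distance `d(ℝv, ℝw) = ‖v ∧ w‖ / (‖v‖ ‖w‖)`. -/
def pd {m : ℕ} (v w : Fin m → ℝ) : ℝ :=
  Real.sqrt (en v ^ 2 * en w ^ 2 - ip v w ^ 2) / (en v * en w)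

/-- The element `ℓ = [[det h, 0],[n, h]]` of the group `L ⊂ SL₃(ℝ)`. -/
def Lmat (h : Matrix (Fin 2) (Fin 2) ℝ) (n : Fin 2 → ℝ) :
    Matrix (Fin 3) (Fin 3) ℝ :=
  !![h.det, 0, 0; n 0, h 0 0, h 0 1; n 1, h 1 0, h 1 1]

/-!
For `w = v - (v₀/z₀) z` and `w'` likewise, `w ⨯₃ w'` is a multiple of `e₁`, and since `z ⨯₃ z = 0`
the triple product `z ⬝ (w ⨯₃ w') = z₀ (w ⨯₃ w')₀` equals `z ⬝ (v ⨯₃ v')`, which is `±‖v ⨯₃ v'‖`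
because `v ⨯₃ v'` is parallel to the unit vector `z`. Hence `‖w ⨯₃ w'‖ = ‖v ⨯₃ v'‖ / |z₀|`.
As `v ⊥ z`, `‖w‖² = ‖v‖² + (v₀/z₀)²`, and Cauchy–Schwarz gives `v₀² ≤ (1 - z₀²) ‖v‖²`, so
`‖v‖/‖w‖ ∈ [|z₀|, 1]`. The distortion `(‖v‖/‖w‖)(‖v'‖/‖w'‖)/|z₀|` thus lies in
`[|z₀|, 1/|z₀|] ⊆ [1/C, C]`.
-/

open Matrix

lemma mul_div_mem_Icc {t a b : ℝ} (ht : 0 < t) (ha : a ∈ Set.Icc t 1) (hb : b ∈ Set.Icc t 1) :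
    a * b / t ∈ Set.Icc t t⁻¹ := by
  refine ⟨(le_div_iff₀ ht).2 ?_, ?_⟩
  · nlinarith [ha.1, hb.1]
  · rw [← one_div]
    exact div_le_div_of_nonneg_right (mul_le_one₀ ha.2 (ht.le.trans hb.1) hb.2) ht.le

/-- The linear projection onto the hyperplane `xᵢ = 0` along `ℝz`; for `V = ℝz`,
`projAlong z 0` is `Π(V, E₁^⊥, V^⊥)`. -/
def projAlong {m : ℕ} (z : Fin m → ℝ) (i : Fin m) (v : Fin m → ℝ) : Fin m → ℝ :=
  v - (v i / z i) • z

section Euclidean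

variable {m : ℕ}

lemma ip_eq_dotProduct (v w : Fin m → ℝ) : ip v w = v ⬝ᵥ w := rfl

lemma en_zero : en (0 : Fin m → ℝ) = 0 := by simp [en]

lemma en_nonneg (v : Fin m → ℝ) : 0 ≤ en v := Real.sqrt_nonneg _

lemma en_sq (v : Fin m → ℝ) : en v ^ 2 = ∑ i, v i ^ 2 :=
  Real.sq_sqrt (Finset.sum_nonneg fun i _ => sq_nonneg (v i))

lemma dotProduct_self_eq_en_sq (v : Fin m → ℝ) : v ⬝ᵥ v = en v ^ 2 := by
  rw [en_sq]
  simp only [dotProduct, sq]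

lemma dotProduct_sq_le (v w : Fin m → ℝ) : (v ⬝ᵥ w) ^ 2 ≤ (v ⬝ᵥ v) * (w ⬝ᵥ w) := by
  simpa only [dotProduct, sq] using Finset.sum_mul_sq_le_sq_mul_sq Finset.univ v w

variable {z v : Fin m → ℝ}

lemma en_sub_smul_sq (hz : en z = 1) (hvz : ip v z = 0) (a : ℝ) :
    en (v - a • z) ^ 2 = en v ^ 2 + a ^ 2 := by
  rw [ip_eq_dotProduct] at hvz
  rw [← dotProduct_self_eq_en_sq, ← dotProduct_self_eq_en_sq]
  simp only [sub_dotProduct, dotProduct_sub, smul_dotProduct, dotProduct_smul,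
    dotProduct_comm z v, hvz, dotProduct_self_eq_en_sq, hz, smul_eq_mul]
  ring

/-- Cauchy–Schwarz against `eᵢ - zᵢ z`, the component of `eᵢ` orthogonal to `z`. -/
lemma sq_apply_le_of_ip_eq_zero (hz : en z = 1) (hvz : ip v z = 0) (i : Fin m) :
    v i ^ 2 ≤ (1 - z i ^ 2) * en v ^ 2 := by
  rw [ip_eq_dotProduct] at hvz
  set e := Pi.single i 1 - z i • z
  have hve : v ⬝ᵥ e = v i := by
    simp only [e, dotProduct_sub, dotProduct_smul, hvz, dotProduct_single, smul_eq_mul]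
    ring
  have hee : e ⬝ᵥ e = 1 - z i ^ 2 := by
    simp only [e, sub_dotProduct, dotProduct_sub, smul_dotProduct, dotProduct_smul,
      single_dotProduct, dotProduct_single, Pi.sub_apply, Pi.smul_apply, Pi.single_eq_same,
      dotProduct_self_eq_en_sq, hz, smul_eq_mul]
    ring
  simpa only [hve, hee, dotProduct_self_eq_en_sq, mul_comm] using dotProduct_sq_le v e

lemma en_le_en_sub_smul (hz : en z = 1) (hvz : ip v z = 0) (a : ℝ) :
    en v ≤ en (v - a • z) := by
  rw [← pow_le_pow_iff_left₀ (en_nonneg _) (en_nonneg _) two_ne_zero, en_sub_smul_sq hz hvz]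
  exact le_add_of_nonneg_right (sq_nonneg a)

lemma abs_mul_en_projAlong_le (hz : en z = 1) (hvz : ip v z = 0) {i : Fin m} (hzi : z i ≠ 0) :
    |z i| * en (projAlong z i v) ≤ en v := by
  rw [← pow_le_pow_iff_left₀ (by positivity [en_nonneg (projAlong z i v)]) (en_nonneg _)
    two_ne_zero, mul_pow, sq_abs, projAlong, en_sub_smul_sq hz hvz, mul_add, div_pow,
    mul_div_cancel₀ _ (pow_ne_zero 2 hzi)]
  linarith [sq_apply_le_of_ip_eq_zero hz hvz i]

lemma projAlong_apply_self {i : Fin m} (hzi : z i ≠ 0) : projAlong z i v i = 0 := by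
  simp [projAlong, div_mul_cancel₀ _ hzi]

lemma en_div_en_projAlong_mem_Icc (hz : en z = 1) (hvz : ip v z = 0) {i : Fin m}
    (hzi : z i ≠ 0) (hv : en v ≠ 0) : en v / en (projAlong z i v) ∈ Set.Icc |z i| 1 := by
  have hle := en_le_en_sub_smul hz hvz (v i / z i)
  have hpos : 0 < en (projAlong z i v) := ((en_nonneg v).lt_of_ne' hv).trans_le hle
  exact ⟨(le_div_iff₀ hpos).2 (abs_mul_en_projAlong_le hz hvz hzi), div_le_one_of_le₀ hle hpos.le⟩

end Euclidean

lemma en_cross_sq (v w : Fin 3 → ℝ) : en (v ⨯₃ w) ^ 2 = en v ^ 2 * en w ^ 2 - ip v w ^ 2 := by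
  rw [← dotProduct_self_eq_en_sq, ← dotProduct_self_eq_en_sq, ← dotProduct_self_eq_en_sq,
    cross_dot_cross, dotProduct_comm w v, ip, sq]
  rfl

lemma pd_eq_en_cross_div (v w : Fin 3 → ℝ) : pd v w = en (v ⨯₃ w) / (en v * en w) := by
  rw [pd, ← en_cross_sq, Real.sqrt_sq (en_nonneg _)]

lemma en_cross_eq_abs_dotProduct {u v w : Fin 3 → ℝ} (hu : en u = 1) (hv : ip v u = 0)
    (hw : ip w u = 0) : en (v ⨯₃ w) = |u ⬝ᵥ v ⨯₃ w| := by
  have h := en_cross_sq u (v ⨯₃ w)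
  rw [ip_eq_dotProduct] at hv hw h
  rw [cross_cross_eq_smul_sub_smul', dotProduct_comm u w, hw, hv, zero_smul, zero_smul,
    sub_self, en_zero, hu] at h
  have hsq : en (v ⨯₃ w) ^ 2 = (u ⬝ᵥ v ⨯₃ w) ^ 2 := by linarith
  rw [← abs_of_nonneg (en_nonneg _)]
  exact (sq_eq_sq_iff_abs_eq_abs _ _).1 hsq

lemma dotProduct_cross_sub_smul (z v w : Fin 3 → ℝ) (a b : ℝ) :
    z ⬝ᵥ (v - a • z) ⨯₃ (w - b • z) = z ⬝ᵥ v ⨯₃ w := by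
  simp only [map_sub, map_smul, LinearMap.sub_apply, LinearMap.smul_apply, cross_self,
    dotProduct_sub, dotProduct_smul, dot_self_cross, dot_cross_self, smul_zero, sub_zero]

lemma abs_mul_en_cross_of_apply_zero (z : Fin 3 → ℝ) {v w : Fin 3 → ℝ} (hv : v 0 = 0)
    (hw : w 0 = 0) : |z 0| * en (v ⨯₃ w) = |z ⬝ᵥ v ⨯₃ w| := by
  rw [en, Fin.sum_univ_three, vec3_dotProduct, cross_apply]
  simp [hv, hw, Real.sqrt_sq_eq_abs, abs_mul]

lemma abs_mul_en_cross_projAlong {z v w : Fin 3 → ℝ} (hz : en z = 1) (hvz : ip v z = 0)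
    (hwz : ip w z = 0) (hz0 : z 0 ≠ 0) :
    |z 0| * en (projAlong z 0 v ⨯₃ projAlong z 0 w) = en (v ⨯₃ w) := by
  rw [abs_mul_en_cross_of_apply_zero z (projAlong_apply_self hz0) (projAlong_apply_self hz0),
    projAlong, projAlong, dotProduct_cross_sub_smul, en_cross_eq_abs_dotProduct hz hvz hwz]

lemma pd_projAlong_div_pd {z v w : Fin 3 → ℝ} (hz : en z = 1) (hvz : ip v z = 0)
    (hwz : ip w z = 0) (hz0 : z 0 ≠ 0) (hvw : en (v ⨯₃ w) ≠ 0) :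
    pd (projAlong z 0 v) (projAlong z 0 w) / pd v w
      = en v / en (projAlong z 0 v) * (en w / en (projAlong z 0 w)) / |z 0| := by
  rw [pd_eq_en_cross_div, pd_eq_en_cross_div, ← abs_mul_en_cross_projAlong hz hvz hwz hz0]
  rw [← abs_mul_en_cross_projAlong hz hvz hwz hz0] at hvw
  have := right_ne_zero_of_mul hvw
  field_simp

theorem projection_along_V_bilipschitz_general
    (C : ℝ) (hC : 1 < C)
    (z : Fin 3 → ℝ) (hz : en z = 1) (hz0 : 1 / C ≤ |z 0|)
    (v v' : Fin 3 → ℝ)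
    (hvz : ip v z = 0) (hv'z : ip v' z = 0)
    (hdist : pd v v' ≠ 0) :
    1 / C ≤ pd (fun i => v i - (v 0 / z 0) * z i) (fun i => v' i - (v' 0 / z 0) * z i)
        / pd v v' ∧
      pd (fun i => v i - (v 0 / z 0) * z i) (fun i => v' i - (v' 0 / z 0) * z i)
        / pd v v' ≤ C := by
  have ht : 0 < |z 0| := (one_div_pos.2 (by linarith)).trans_le hz0
  have hz0' : z 0 ≠ 0 := abs_pos.1 ht
  rw [pd_eq_en_cross_div, div_ne_zero_iff, mul_ne_zero_iff] at hdist
  obtain ⟨hcross, hv, hv'⟩ := hdist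
  change 1 / C ≤ pd (projAlong z 0 v) (projAlong z 0 v') / pd v v' ∧
    pd (projAlong z 0 v) (projAlong z 0 v') / pd v v' ≤ C
  rw [pd_projAlong_div_pd hz hvz hv'z hz0' hcross]
  obtain ⟨hlo, hhi⟩ := mul_div_mem_Icc ht (en_div_en_projAlong_mem_Icc hz hvz hz0' hv)
    (en_div_en_projAlong_mem_Icc hz hv'z hz0' hv')
  refine ⟨hz0.trans hlo, hhi.trans ?_⟩
  rwa [inv_le_comm₀ ht (by linarith), ← one_div]

theorem projection_along_V_bilipschitz
    (C : ℝ) (hC : 1 < C)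
    (z : Fin 3 → ℝ) (hz : en z = 1) (hz0 : 1 / C ≤ |z 0|)
    (v v' : Fin 3 → ℝ) (hv : v ≠ 0) (hv' : v' ≠ 0)
    (hvz : ip v z = 0) (hv'z : ip v' z = 0)
    (hdist : pd v v' ≠ 0) :
    1 / C ≤ pd (fun i => v i - (v 0 / z 0) * z i) (fun i => v' i - (v' 0 / z 0) * z i)
        / pd v v' ∧
      pd (fun i => v i - (v 0 / z 0) * z i) (fun i => v' i - (v' 0 / z 0) * z i)
        / pd v v' ≤ C :=
  projection_along_V_bilipschitz_general C hC z hz hz0 v v' hvz hv'z hdist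
end
end
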